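/- arXiv:1206.1196 — 3 statements merged into one kernel-verified Lean document; each statement's English description precedes it below -/
import Mathlib

section
/- Let g be an orientation-preserving C² diffeomorphism of the circle with nonabelian centralizer in Diff₊²(S¹). Then g has rational rotation number; equivalently, some power g^k (k ≥ 1) has a fixed point. -/
/-- The lift of an orientation-preserving C² diffeomorphism of the circle S¹ = ℝ/ℤ:
a strictly monotone bijection of ℝ commuting with integer translation, C² with C² inverse. -/
def IsCircleDiffLift (g : ℝ ≃ ℝ) : Prop :=
  StrictMono ⇑g ∧ (∀ x : ℝ, g (x + 1) = g x + 1) ∧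
  ContDiff ℝ 2 ⇑g ∧ ContDiff ℝ 2 ⇑g.symm

/-!
If `g` had no periodic orbit, its rotation number `θ` would be irrational, and Poincaré's
semiconjugacy `Φ` (monotone, `Φ ∘ g = Φ + θ`) would be injective by Denjoy's argument. An interval
`J` collapsed by `Φ` has images `gⁿ J` that are pairwise disjoint modulo `1`, so their lengths are
summable. But at a closest return time `q` of `θ` the intervals between `gⁱ x` and `gⁱ⁻ᵠ x + p`,
`0 ≤ i < q`, `p` the integer nearest to `q θ`, are disjoint modulo `1` too, which bounds the
distortion of `gᵠ` between `g⁻ᵠ x` and `x` by `2 K`, `K` a Lipschitz constant of `log g'`; this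
forces `|gᵠ J| + |g⁻ᵠ J| ≥ 2 e⁻ᴷ |J|`.
Hence `Φ` is a conjugacy to the rotation by `θ`, the orbits of `g` are dense, and `Φ` turns every
continuous lift commuting with `g` into a translation. Translations commute, so the centralizer of
`g` would be abelian.
-/

open Function Set Filter Topology Real MeasureTheory
open scoped NNReal

theorem Irrational.intCast_mul_add_intCast_ne {θ : ℝ} (hθ : Irrational θ) {n k m l : ℤ}
    (h : n ≠ k ∨ m ≠ l) : n * θ + m ≠ k * θ + l := by
  intro heq
  rcases eq_or_ne n k with rfl | hnk
  · exact h.resolve_left (not_not.2 rfl) (by exact_mod_cast add_left_cancel heq)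
  · exact (hθ.intCast_mul (sub_ne_zero.2 hnk)).ne_int (l - m) (by push_cast; linarith)

theorem Irrational.dense_setOf_add_intCast_mul_add_intCast {θ : ℝ} (hθ : Irrational θ) (c : ℝ) :
    Dense {t | ∃ n m : ℤ, c + n * θ + m = t} := by
  have hd := dense_addSubgroupClosure_pair_iff.2 (by rwa [div_one] : Irrational (θ / 1))
  refine (hd.vadd c).mono ?_
  rintro _ ⟨s, hs, rfl⟩
  obtain ⟨n, m, rfl⟩ := AddSubgroup.mem_closure_pair.1 hs
  exact ⟨n, m, by simp [add_assoc]⟩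

def IsClosestReturn (θ : ℝ) (q : ℕ) : Prop :=
  0 < q ∧ ∀ i : ℕ, 0 < i → i < q → |q * θ - round (q * θ)| < |i * θ - round (i * θ)|

theorem exists_pos_natCast_mul_sub_round_lt (θ : ℝ) {ε : ℝ} (hε : 0 < ε) :
    ∃ k : ℕ, 0 < k ∧ |k * θ - round (k * θ)| < ε := by
  obtain ⟨n, hn⟩ := exists_nat_one_div_lt hε
  obtain ⟨k, hk, -, hkn⟩ := Real.exists_nat_abs_mul_sub_round_le θ n.succ_pos
  refine ⟨k, hk, hkn.trans_lt (lt_of_le_of_lt ?_ hn)⟩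
  gcongr
  linarith

theorem exists_isClosestReturn_gt {θ : ℝ} (hθ : Irrational θ) (N : ℕ) :
    ∃ q, N < q ∧ IsClosestReturn θ q := by
  classical
  obtain ⟨i₀, hi₀, hmin⟩ := (Finset.Icc 1 (N + 1)).exists_min_image
    (fun i : ℕ => |i * θ - round (i * θ)|) ⟨1, by simp⟩
  have hpos : 0 < |i₀ * θ - round (i₀ * θ)| := abs_pos.2 <| sub_ne_zero.2 <|
    (hθ.natCast_mul (by grind)).ne_int _
  -- the first `k` at which `‖k θ‖` beats every `‖i θ‖`, `1 ≤ i ≤ N + 1`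
  have hex := exists_pos_natCast_mul_sub_round_lt θ hpos
  refine ⟨Nat.find hex, ?_, (Nat.find_spec hex).1, fun i hi hiq => ?_⟩
  · by_contra! hle
    exact (hmin _ (Finset.mem_Icc.2 ⟨(Nat.find_spec hex).1, by omega⟩)).not_gt
      (Nat.find_spec hex).2
  · exact (Nat.find_spec hex).2.trans_le (not_lt.1 fun h => Nat.find_min hex hiq ⟨hi, h⟩)

theorem IsClosestReturn.abs_sub_round_lt {θ : ℝ} {q i j : ℕ} (hq : IsClosestReturn θ q)
    (hi : i < q) (hj : j < q) {m : ℤ} (h : i ≠ j ∨ m ≠ 0) :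
    |q * θ - round (q * θ)| < |((i : ℝ) - j) * θ + m| := by
  rcases lt_trichotomy i j with hij | rfl | hij
  · calc _ < _ := hq.2 (j - i) (by omega) (by omega)
      _ ≤ |((j - i : ℕ) : ℝ) * θ - m| := round_le _ _
      _ = _ := by rw [← abs_neg]; push_cast [hij.le]; ring_nf
  · have hm : (1 : ℝ) ≤ |(m : ℝ)| := by
      exact_mod_cast Int.one_le_abs (h.resolve_left (not_not.2 rfl))
    have := abs_sub_round ((q : ℝ) * θ)
    simp only [sub_self, zero_mul, zero_add]
    linarith
  · calc _ < _ := hq.2 (i - j) (by omega) (by omega)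
      _ ≤ |((i - j : ℕ) : ℝ) * θ - (-m : ℤ)| := round_le _ _
      _ = _ := by push_cast [hij.le]; ring_nf

/-- Shifted into `[0, 1)` by the integer parts of their left endpoints, the intervals become
disjoint subsets of `(0, 2)`. -/
theorem sum_sub_le_two_of_separated {ι : Type*} (s : Finset ι) (a b : ι → ℝ)
    (hab : ∀ i ∈ s, a i ≤ b i)
    (hsep : ∀ i ∈ s, ∀ j ∈ s, ∀ m : ℤ, (i ≠ j ∨ m ≠ 0) → b i + m ≤ a j ∨ b j ≤ a i + m) :
    ∑ i ∈ s, (b i - a i) ≤ 2 := by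
  set I : ι → Set ℝ := fun i => Ioo (a i - ⌊a i⌋) (b i - ⌊a i⌋)
  have hdisj : (s : Set ι).PairwiseDisjoint I := by
    intro i hi j hj hij
    refine Set.disjoint_left.2 fun x hxi hxj => ?_
    rcases hsep i hi j hj (⌊a j⌋ - ⌊a i⌋) (Or.inl hij) with h | h <;>
      · push_cast at h; linarith [hxi.1, hxi.2, hxj.1, hxj.2]
  have hsub : ∀ i ∈ s, I i ⊆ Ioo 0 2 := by
    intro i hi x hx
    have hlen : b i ≤ a i + 1 := by
      have := hsep i hi i hi 1 (Or.inr one_ne_zero)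
      push_cast at this
      exact this.resolve_left (by linarith [hab i hi])
    constructor <;> linarith [hx.1, hx.2, Int.floor_le (a i), Int.lt_floor_add_one (a i)]
  calc ∑ i ∈ s, (b i - a i) = ∑ i ∈ s, volume.real (I i) :=
        Finset.sum_congr rfl fun i hi => by
          rw [volume_real_Ioo_of_le (by linarith [hab i hi])]; ring
    _ = volume.real (⋃ i ∈ s, I i) :=
        (measureReal_biUnion_finset hdisj (fun _ _ => measurableSet_Ioo)
          fun _ _ => measure_Ioo_lt_top.ne).symm
    _ ≤ volume.real (Ioo (0 : ℝ) 2) :=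
        measureReal_mono (iUnion₂_subset hsub) measure_Ioo_lt_top.ne
    _ = 2 := by simp

section Calculus

variable {𝕜 : Type*} [NontriviallyNormedField 𝕜]

theorem hasDerivAt_iterate_prod {φ : 𝕜 → 𝕜} (hφ : Differentiable 𝕜 φ) (n : ℕ) (x : 𝕜) :
    HasDerivAt φ^[n] (∏ i ∈ Finset.range n, deriv φ (φ^[i] x)) x := by
  induction n with
  | zero => simpa using hasDerivAt_id x
  | succ n ih =>
    rw [Finset.prod_range_succ, mul_comm, iterate_succ']
    exact (hφ _).hasDerivAt.comp x ih

theorem deriv_apply_mul_deriv_of_rightInverse {φ ψ : 𝕜 → 𝕜} (hφ : Differentiable 𝕜 φ)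
    (hψ : Differentiable 𝕜 ψ) (h : RightInverse ψ φ) (x : 𝕜) :
    deriv φ (ψ x) * deriv ψ x = 1 := by
  have hcomp := (hφ (ψ x)).hasDerivAt.comp x (hψ x).hasDerivAt
  rw [show φ ∘ ψ = id from funext h] at hcomp
  exact hcomp.unique (hasDerivAt_id x)

theorem Function.Periodic.deriv {F : Type*} [NormedAddCommGroup F] [NormedSpace 𝕜 F]
    {u : 𝕜 → F} {c : 𝕜} (hp : Periodic u c) : Periodic (deriv u) c :=
  fun x => by rw [← deriv_comp_add_const, show (fun y => u (y + c)) = u from funext hp]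

end Calculus

theorem Function.Periodic.exists_lipschitzWith {F : Type*} [NormedAddCommGroup F]
    [NormedSpace ℝ F] {u : ℝ → F} {c : ℝ} (hu : ContDiff ℝ 1 u) (hp : Periodic u c)
    (hc : c ≠ 0) : ∃ K, LipschitzWith K u := by
  obtain ⟨C, hC⟩ := isBounded_iff_forall_norm_le.1
    (hp.deriv.isBounded_of_continuous hc (hu.continuous_deriv le_rfl))
  refine ⟨C.toNNReal, lipschitzWith_of_nnnorm_deriv_le (hu.differentiable one_ne_zero) fun x => ?_⟩
  rw [← NNReal.coe_le_coe, coe_nnnorm, Real.coe_toNNReal']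
  exact (hC _ (mem_range_self x)).trans (le_max_left _ _)

theorem abs_log_deriv_iterate_sub_le {φ : ℝ → ℝ} (hφ : Differentiable ℝ φ)
    (hpos : ∀ x, 0 < deriv φ x) {K : ℝ≥0} (hK : LipschitzWith K fun x => log (deriv φ x))
    (n : ℕ) (x y : ℝ) :
    |log (deriv φ^[n] x) - log (deriv φ^[n] y)| ≤
      K * ∑ i ∈ Finset.range n, |φ^[i] x - φ^[i] y| := by
  rw [(hasDerivAt_iterate_prod hφ n x).deriv, (hasDerivAt_iterate_prod hφ n y).deriv,
    log_prod fun i _ => (hpos _).ne', log_prod fun i _ => (hpos _).ne', ← Finset.sum_sub_distrib,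
    Finset.mul_sum]
  refine (Finset.abs_sum_le_sum_abs _ _).trans (Finset.sum_le_sum fun i _ => ?_)
  simpa only [Real.dist_eq] using hK.dist_le_mul (φ^[i] x) (φ^[i] y)

namespace CircleDeg1Lift

local notation "τ" => translationNumber

def ofStrictMonoEquiv (g : ℝ ≃ ℝ) (hg : StrictMono g) (h1 : ∀ x, g (x + 1) = g x + 1) :
    CircleDeg1Liftˣ where
  val := ⟨⟨g, hg.monotone⟩, h1⟩
  inv := ⟨⟨g.symm, fun a b hab => by
      rwa [← hg.le_iff_le, g.apply_symm_apply, g.apply_symm_apply]⟩,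
    fun x => g.symm_apply_eq.2 (by rw [h1, g.apply_symm_apply])⟩
  val_inv := ext g.apply_symm_apply
  inv_val := ext g.symm_apply_apply

theorem exists_iterate_eq_add_int_of_not_irrational {f : CircleDeg1Lift} (hf : Continuous f)
    (h : ¬Irrational (τ f)) : ∃ n : ℕ, 0 < n ∧ ∃ x : ℝ, ∃ m : ℤ, f^[n] x = x + m := by
  obtain ⟨r, hr⟩ := exists_rat_of_not_irrational h
  obtain ⟨x, hx⟩ := (f.translationNumber_eq_rat_iff hf r.den_pos).1 (by rw [hr, Rat.cast_def])
  exact ⟨r.den, r.den_pos, x, r.num, by rwa [← coe_pow]⟩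

/-- `n = τ (f * F) - τ (F * f)`, and conjugation by `f` shows that these translation numbers
agree. -/
theorem commute_of_apply_eq_add_int (f : CircleDeg1Liftˣ) (F : CircleDeg1Lift) {n : ℤ}
    (h : ∀ x, f (F x) = F (f x) + n) : Commute (f : CircleDeg1Lift) F := by
  set T : CircleDeg1Lift := ↑(translate (Multiplicative.ofAdd (n : ℝ)))
  have hT : ↑f * F = T * (F * f) := ext fun x => by simp [T, h, add_comm]
  have hTcomm : Commute T (F * f) := (commute_iff_commute.2 ((F * f).commute_int_add n)).symm
  have hτ : τ (↑f * F) = τ (F * ↑f) := by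
    rw [← translationNumber_conj_eq f (F * ↑f), mul_assoc, mul_assoc, Units.mul_inv, mul_one]
  rw [hT, translationNumber_mul_of_commute hTcomm, translationNumber_translate] at hτ
  have hn : n = 0 := by exact_mod_cast add_eq_right.1 hτ
  exact ext fun x => by simpa [hn] using h x

theorem periodic_deriv (f : CircleDeg1Lift) : Periodic (deriv f) 1 := fun x => by
  rw [← deriv_comp_add_const, show (fun y => f (y + 1)) = fun y => f y + 1 from
    funext f.map_add_one, deriv_add_const]

theorem exists_lipschitzWith_log_deriv {f : CircleDeg1Lift} (hf : ContDiff ℝ 2 f)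
    (hpos : ∀ x, 0 < deriv f x) : ∃ K, LipschitzWith K fun x => log (deriv f x) :=
  Periodic.exists_lipschitzWith ((hf.deriv' (n := 1)).log fun x => (hpos x).ne')
    (fun x => by simp only [f.periodic_deriv x]) one_ne_zero

theorem deriv_pos_of_differentiable_inv {f : CircleDeg1Liftˣ} (hf : Differentiable ℝ f)
    (hf' : Differentiable ℝ ⇑f⁻¹) (x : ℝ) : 0 < deriv f x := by
  refine (f : CircleDeg1Lift).monotone.deriv_nonneg.lt_of_ne fun h => ?_
  have := deriv_apply_mul_deriv_of_rightInverse hf hf' (units_apply_inv_apply f) (f x)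
  rw [units_inv_apply_apply, ← h, zero_mul] at this
  exact zero_ne_one this

theorem zpow_natCast_apply (f : CircleDeg1Liftˣ) (n : ℕ) (x : ℝ) :
    (f ^ (n : ℤ) : CircleDeg1Liftˣ) x = (⇑f)^[n] x := by
  rw [zpow_natCast, Units.val_pow_eq_pow_val, coe_pow]

theorem zpow_neg_natCast_apply (f : CircleDeg1Liftˣ) (n : ℕ) (x : ℝ) :
    (f ^ (-n : ℤ) : CircleDeg1Liftˣ) x = (⇑f⁻¹)^[n] x := by
  rw [zpow_neg, ← inv_zpow, zpow_natCast_apply]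

theorem exists_semiconj_translate (f : CircleDeg1Liftˣ) :
    ∃ Φ : CircleDeg1Lift, ∀ x, Φ (f x) = Φ x + τ f := by
  obtain ⟨Φ, hΦ⟩ := units_semiconj_of_translationNumber_eq
    (f₂ := translate (Multiplicative.ofAdd (τ f))) (translationNumber_translate _).symm
  exact ⟨Φ, fun x => by rw [hΦ x, translate_apply, add_comm]⟩

section Semiconj

variable {f : CircleDeg1Liftˣ} {Φ : CircleDeg1Lift} {θ : ℝ}

theorem map_zpow_apply (hΦ : ∀ x, Φ (f x) = Φ x + θ) (n : ℤ) (x : ℝ) :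
    Φ ((f ^ n : CircleDeg1Liftˣ) x) = Φ x + n * θ := by
  induction n using Int.induction_on generalizing x with
  | zero => simp
  | succ n ih => rw [zpow_add_one, Units.val_mul, mul_apply, ih, hΦ]; push_cast; ring
  | pred n ih =>
    have hinv : Φ (f⁻¹ x) = Φ x - θ := by
      linarith [units_apply_inv_apply f x ▸ hΦ (f⁻¹ x)]
    rw [zpow_sub_one, Units.val_mul, mul_apply, ih, hinv]; push_cast; ring

theorem map_iterate_apply (hΦ : ∀ x, Φ (f x) = Φ x + θ) (n : ℕ) (x : ℝ) :
    Φ ((⇑f)^[n] x) = Φ x + n * θ := by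
  rw [← zpow_natCast_apply, map_zpow_apply hΦ, Int.cast_natCast]

theorem map_inv_iterate_apply (hΦ : ∀ x, Φ (f x) = Φ x + θ) (n : ℕ) (x : ℝ) :
    Φ ((⇑f⁻¹)^[n] x) = Φ x - n * θ := by
  rw [← zpow_neg_natCast_apply, map_zpow_apply hΦ]; push_cast; ring

/-- In the coordinate `Φ`, the point `fⁱ (f⁻ᵠ x + p)` lies `q θ - p` below `fⁱ x`, while the
points `i θ + m`, `i < q`, are more than `|q θ - p|` apart. -/
theorem sum_abs_iterate_sub_le_two (hΦ : ∀ x, Φ (f x) = Φ x + θ) {q : ℕ}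
    (hq : IsClosestReturn θ q) (x : ℝ) :
    ∑ i ∈ Finset.range q, |(⇑f)^[i] x - (⇑f)^[i] ((⇑f⁻¹)^[q] x + round (q * θ))| ≤ 2 := by
  set p := round (q * θ)
  set X : ℕ → ℝ := fun i => (⇑f)^[i] x
  set Y : ℕ → ℝ := fun i => (⇑f)^[i] ((⇑f⁻¹)^[q] x + p)
  have hX : ∀ i, Φ (X i) = Φ x + i * θ := fun i => map_iterate_apply hΦ i x
  have hY : ∀ i, Φ (Y i) = Φ x + i * θ - (q * θ - p) := fun i => by
    simp only [Y, map_iterate_apply hΦ, map_add_int, map_inv_iterate_apply hΦ]; ring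
  simp_rw [← max_sub_min_eq_abs]
  refine sum_sub_le_two_of_separated _ _ _ (fun _ _ => min_le_max) fun i hi j hj m hij => ?_
  have hE := hq.abs_sub_round_lt (Finset.mem_range.1 hi) (Finset.mem_range.1 hj) (m := m)
    (by exact_mod_cast hij)
  change |q * θ - (p : ℝ)| < _ at hE
  have hδ := abs_le.1 (le_refl |q * θ - p|)
  rcases lt_or_gt_of_ne (abs_pos.1 ((abs_nonneg _).trans_lt hE)) with hneg | hpos
  · rw [abs_of_neg hneg] at hE
    refine Or.inl (Φ.monotone.reflect_lt ?_).le
    rw [map_add_int, Φ.monotone.map_max, Φ.monotone.map_min, hX, hY, hX, hY, ← max_add_add_right]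
    exact max_lt (lt_min (by linarith) (by linarith)) (lt_min (by linarith) (by linarith))
  · rw [abs_of_pos hpos] at hE
    refine Or.inr (Φ.monotone.reflect_lt ?_).le
    rw [map_add_int, Φ.monotone.map_max, Φ.monotone.map_min, hX, hY, hX, hY, ← min_add_add_right]
    exact max_lt (lt_min (by linarith) (by linarith)) (lt_min (by linarith) (by linarith))

theorem exp_neg_two_mul_le_deriv_iterate_mul (hf : Differentiable ℝ f)
    (hf' : Differentiable ℝ ⇑f⁻¹) {K : ℝ≥0} (hK : LipschitzWith K fun x => log (deriv f x))
    (hΦ : ∀ x, Φ (f x) = Φ x + θ) {q : ℕ} (hq : IsClosestReturn θ q) (x : ℝ) :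
    exp (-(2 * K)) ≤ deriv (⇑f)^[q] x * deriv (⇑f⁻¹)^[q] x := by
  have hpos := deriv_pos_of_differentiable_inv hf hf'
  set x' := (⇑f⁻¹)^[q] x
  have hDpos : ∀ z, 0 < deriv (⇑f)^[q] z := fun z => by
    rw [(hasDerivAt_iterate_prod hf q z).deriv]; exact Finset.prod_pos fun i _ => hpos _
  have hinv : deriv (⇑f)^[q] x' * deriv (⇑f⁻¹)^[q] x = 1 :=
    deriv_apply_mul_deriv_of_rightInverse (hf.iterate q) (hf'.iterate q)
      (RightInverse.iterate (f := ⇑f) (units_apply_inv_apply f) q) x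
  have hper : deriv (⇑f)^[q] (x' + round (q * θ)) = deriv (⇑f)^[q] x' := by
    simpa [coe_pow] using (((f : CircleDeg1Lift) ^ q).periodic_deriv.int_mul (round (q * θ))) x'
  have hdist := (abs_le.1 ((abs_log_deriv_iterate_sub_le hf hpos hK q x (x' + round (q * θ))).trans
    (mul_le_mul_of_nonneg_left (sum_abs_iterate_sub_le_two hΦ hq x) K.2))).1
  rw [hper] at hdist
  calc exp (-(2 * K)) ≤ exp (log (deriv (⇑f)^[q] x) - log (deriv (⇑f)^[q] x')) :=
        exp_le_exp.2 (by linarith)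
    _ = _ := by
      rw [exp_sub, exp_log (hDpos x), exp_log (hDpos x'), eq_inv_of_mul_eq_one_right hinv,
        div_eq_mul_inv]

/-- The derivatives of `fᵠ` and `f⁻ᵠ` have product at least `e⁻²ᴷ`, hence sum at least
`2 e⁻ᴷ`. -/
theorem mul_sub_le_iterate_sub_add_inv_iterate_sub (hf : Differentiable ℝ f)
    (hf' : Differentiable ℝ ⇑f⁻¹) {K : ℝ≥0} (hK : LipschitzWith K fun x => log (deriv f x))
    (hΦ : ∀ x, Φ (f x) = Φ x + θ) {q : ℕ} (hq : IsClosestReturn θ q) {a b : ℝ} (hab : a ≤ b) :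
    2 * exp (-K) * (b - a) ≤ ((⇑f)^[q] b - (⇑f)^[q] a) + ((⇑f⁻¹)^[q] b - (⇑f⁻¹)^[q] a) := by
  have hsum := mul_sub_le_image_sub_of_le_deriv ((hf.iterate q).add (hf'.iterate q))
    (C := 2 * exp (-K)) (fun x => ?_) hab
  · simp only [Pi.add_apply] at hsum
    linarith
  have hu : 0 < deriv (⇑f)^[q] x := by
    rw [(hasDerivAt_iterate_prod hf q x).deriv]
    exact Finset.prod_pos fun i _ => deriv_pos_of_differentiable_inv hf hf' _
  have huv := exp_neg_two_mul_le_deriv_iterate_mul hf hf' hK hΦ hq x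
  have hv : 0 < deriv (⇑f⁻¹)^[q] x := pos_of_mul_pos_right ((exp_pos _).trans_le huv) hu.le
  have hsq : exp (-(2 * K)) = exp (-K) ^ 2 := by rw [← exp_nat_mul]; ring_nf
  rw [deriv_add ((hf.iterate q) x) ((hf'.iterate q) x)]
  nlinarith [sq_nonneg (deriv (⇑f)^[q] x - deriv (⇑f⁻¹)^[q] x), exp_pos (-(K : ℝ))]

/-- The intervals `fⁿ [a, b] + m` are collapsed by `Φ` to the distinct points `Φ a + n θ + m`,
hence pairwise disjoint. -/
theorem sum_zpow_sub_le_two (hΦ : ∀ x, Φ (f x) = Φ x + θ) (hθ : Irrational θ) {a b : ℝ}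
    (hab : a ≤ b) (hΦab : Φ a = Φ b) (s : Finset ℤ) :
    ∑ n ∈ s, ((f ^ n : CircleDeg1Liftˣ) b - (f ^ n : CircleDeg1Liftˣ) a) ≤ 2 := by
  refine sum_sub_le_two_of_separated s _ _
    (fun n _ => ((f ^ n : CircleDeg1Liftˣ) : CircleDeg1Lift).monotone hab) fun n _ k _ m hnk => ?_
  rcases (hθ.intCast_mul_add_intCast_ne (m := m) (l := 0) hnk).lt_or_gt with hlt | hgt
  · refine Or.inl (Φ.monotone.reflect_lt ?_).le
    rw [map_add_int, map_zpow_apply hΦ, map_zpow_apply hΦ, hΦab]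
    push_cast at hlt
    linarith
  · refine Or.inr (Φ.monotone.reflect_lt ?_).le
    rw [map_add_int, map_zpow_apply hΦ, map_zpow_apply hΦ, hΦab]
    push_cast at hgt
    linarith

/-- Denjoy's theorem. -/
theorem injective_of_semiconj_translate (hf : ContDiff ℝ 2 f) (hf' : Differentiable ℝ ⇑f⁻¹)
    (hΦ : ∀ x, Φ (f x) = Φ x + θ) (hθ : Irrational θ) : Injective Φ := by
  have hdiff : Differentiable ℝ f := hf.differentiable two_ne_zero
  obtain ⟨K, hK⟩ := exists_lipschitzWith_log_deriv hf (deriv_pos_of_differentiable_inv hdiff hf')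
  intro a b hΦab
  by_contra hne
  wlog hlt : a < b generalizing a b
  · exact this hΦab.symm (Ne.symm hne) ((not_lt.1 hlt).lt_of_ne (Ne.symm hne))
  set ℓ : ℤ → ℝ := fun n => (f ^ n : CircleDeg1Liftˣ) b - (f ^ n : CircleDeg1Liftˣ) a
  have hℓ : Summable ℓ := summable_of_sum_le
    (fun n => sub_nonneg.2 (((f ^ n : CircleDeg1Liftˣ) : CircleDeg1Lift).monotone hlt.le))
    (sum_zpow_sub_le_two hΦ hθ hlt.le hΦab)
  have hℓ0 := hℓ.tendsto_cofinite_zero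
  have htend : Tendsto (fun q : ℕ => ℓ q + ℓ (-q)) atTop (𝓝 0) := by
    rw [← Nat.cofinite_eq_atTop, ← add_zero (0 : ℝ)]
    exact (hℓ0.comp Nat.cast_injective.tendsto_cofinite).add
      (hℓ0.comp (neg_injective.comp Nat.cast_injective).tendsto_cofinite)
  obtain ⟨N, hN⟩ := eventually_atTop.1 <|
    htend.eventually (gt_mem_nhds (by positivity : 0 < 2 * exp (-K) * (b - a)))
  obtain ⟨q, hNq, hq⟩ := exists_isClosestReturn_gt hθ N
  have hgrow := mul_sub_le_iterate_sub_add_inv_iterate_sub hdiff hf' hK hΦ hq hlt.le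
  have hsmall := hN q hNq.le
  simp only [ℓ, zpow_natCast_apply, zpow_neg_natCast_apply] at hsmall
  linarith

theorem continuous_of_semiconj (hΦ : ∀ x, Φ (f x) = Φ x + θ) (hθ : Irrational θ) :
    Continuous Φ := by
  refine Φ.monotone.continuous_of_denseRange
    ((hθ.dense_setOf_add_intCast_mul_add_intCast (Φ 0)).mono ?_)
  rintro _ ⟨n, m, rfl⟩
  exact ⟨(f ^ n : CircleDeg1Liftˣ) 0 + m, by rw [map_add_int, map_zpow_apply hΦ]⟩

theorem dense_orbit_of_semiconj (hΦ : ∀ x, Φ (f x) = Φ x + θ) (hθ : Irrational θ)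
    (hinj : Injective Φ) (x : ℝ) :
    Dense {y | ∃ n m : ℤ, (f ^ n : CircleDeg1Liftˣ) x + m = y} := by
  refine dense_iff_exists_between.2 fun a b hab => ?_
  obtain ⟨_, ⟨n, m, rfl⟩, ha, hb⟩ :=
    (hθ.dense_setOf_add_intCast_mul_add_intCast (Φ x)).exists_between
      (Φ.monotone.strictMono_of_injective hinj hab)
  refine ⟨_, ⟨n, m, rfl⟩, Φ.monotone.reflect_lt ?_, Φ.monotone.reflect_lt ?_⟩ <;>
    rwa [map_add_int, map_zpow_apply hΦ]

/-- `Φ ∘ F - Φ` is continuous and invariant under `f` and integer translations, hence constant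
along the dense orbits. -/
theorem exists_map_apply_eq_add_of_commute (hΦ : ∀ x, Φ (f x) = Φ x + θ) (hθ : Irrational θ)
    (hinj : Injective Φ) {F : CircleDeg1Lift} (hF : Continuous F)
    (hcomm : Commute (f : CircleDeg1Lift) F) : ∃ c, ∀ x, Φ (F x) = Φ x + c := by
  have hΦc := continuous_of_semiconj hΦ hθ
  set e : ℝ → ℝ := fun x => Φ (F x) - Φ x
  have horbit : ∀ n m : ℤ, e ((f ^ n : CircleDeg1Liftˣ) 0 + m) = e 0 := by
    intro n m
    have hn := commute_iff_commute.1 (hcomm.units_zpow_left n)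
    simp only [e, map_add_int, ← hn.eq, map_zpow_apply hΦ]
    ring
  have he : e = fun _ => e 0 := ((hΦc.comp hF).sub hΦc).ext_on
    (dense_orbit_of_semiconj hΦ hθ hinj 0) continuous_const
    (by rintro _ ⟨n, m, rfl⟩; exact horbit n m)
  exact ⟨e 0, fun x => by linarith [congrFun he x]⟩

end Semiconj

theorem commute_of_commute_of_irrational {f : CircleDeg1Liftˣ} (hf : ContDiff ℝ 2 f)
    (hf' : Differentiable ℝ ⇑f⁻¹) (hθ : Irrational (τ f)) {F₁ F₂ : CircleDeg1Lift}
    (hF₁ : Continuous F₁) (hF₂ : Continuous F₂) (h₁ : Commute (f : CircleDeg1Lift) F₁)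
    (h₂ : Commute (f : CircleDeg1Lift) F₂) : Commute F₁ F₂ := by
  obtain ⟨Φ, hΦ⟩ := exists_semiconj_translate f
  have hinj := injective_of_semiconj_translate hf hf' hΦ hθ
  obtain ⟨c₁, hc₁⟩ := exists_map_apply_eq_add_of_commute hΦ hθ hinj hF₁ h₁
  obtain ⟨c₂, hc₂⟩ := exists_map_apply_eq_add_of_commute hΦ hθ hinj hF₂ h₂
  refine ext fun x => hinj ?_
  simp only [mul_apply, hc₁, hc₂]
  ring

end CircleDeg1Lift

/-- Circle diffeomorphisms commute iff their lifts commute up to an integer translation. -/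
theorem nonabelian_centralizer_rational_rotation (g : ℝ ≃ ℝ) (hg : IsCircleDiffLift g)
    (hna : ∃ h₁ h₂ : ℝ ≃ ℝ, IsCircleDiffLift h₁ ∧ IsCircleDiffLift h₂ ∧
      (∃ n : ℤ, ∀ x : ℝ, g (h₁ x) = h₁ (g x) + n) ∧
      (∃ n : ℤ, ∀ x : ℝ, g (h₂ x) = h₂ (g x) + n) ∧
      (∀ n : ℤ, ∃ x : ℝ, h₁ (h₂ x) ≠ h₂ (h₁ x) + n)) :
    ∃ k : ℕ, 0 < k ∧ ∃ x : ℝ, ∃ m : ℤ, (⇑g)^[k] x = x + m := by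
  obtain ⟨hmono, hper, hC2, hC2symm⟩ := hg
  set f := CircleDeg1Lift.ofStrictMonoEquiv g hmono hper
  by_cases hθ : Irrational (f : CircleDeg1Lift).translationNumber
  · exfalso
    obtain ⟨h₁, h₂, ⟨hmono₁, hper₁, hC2₁, -⟩, ⟨hmono₂, hper₂, hC2₂, -⟩, ⟨n₁, hn₁⟩, ⟨n₂, hn₂⟩,
      hnc⟩ := hna
    set F₁ : CircleDeg1Lift := ↑(CircleDeg1Lift.ofStrictMonoEquiv h₁ hmono₁ hper₁)
    set F₂ : CircleDeg1Lift := ↑(CircleDeg1Lift.ofStrictMonoEquiv h₂ hmono₂ hper₂)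
    have hcomm : Commute F₁ F₂ :=
      CircleDeg1Lift.commute_of_commute_of_irrational hC2 (hC2symm.differentiable two_ne_zero)
        hθ hC2₁.continuous hC2₂.continuous (CircleDeg1Lift.commute_of_apply_eq_add_int f F₁ hn₁)
        (CircleDeg1Lift.commute_of_apply_eq_add_int f F₂ hn₂)
    obtain ⟨x, hx⟩ := hnc 0
    exact hx (by simpa using (congr($hcomm x) : h₁ (h₂ x) = h₂ (h₁ x)))
  · exact CircleDeg1Lift.exists_iterate_eq_add_int_of_not_irrational hC2.continuous hθ
end

section
/- Every homeomorphism of the circle that commutes with an irrational rotation is itself a rotation. -/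
theorem Function.Periodic.apply_eq_apply_zero_of_denseRange_zsmul {G X : Type*} [AddGroup G]
    [TopologicalSpace G] [TopologicalSpace X] [T2Space X] {g : G → X} {a : G}
    (hg : Function.Periodic g a) (hgc : Continuous g) (ha : DenseRange (· • a : ℤ → G)) (x : G) :
    g x = g 0 :=
  congrFun (ha.equalizer hgc continuous_const (funext hg.zsmul_eq)) x

theorem exists_eq_add_of_commute_add_of_denseRange_zsmul {G : Type*} [AddCommGroup G]
    [TopologicalSpace G] [ContinuousSub G] [T2Space G] {f : G → G} (hf : Continuous f) {a : G}
    (ha : DenseRange (· • a : ℤ → G)) (hcomm : ∀ x, f (x + a) = f x + a) :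
    ∃ b, ∀ x, f x = x + b := by
  have hperiodic : Function.Periodic (fun x => f x - x) a := fun x => by
    simp only [hcomm, add_sub_add_right_eq_sub]
  refine ⟨f 0 - 0, fun x => ?_⟩
  rw [← hperiodic.apply_eq_apply_zero_of_denseRange_zsmul (hf.sub continuous_id) ha x, add_sub_cancel]

/-- Every homeomorphism of the circle ℝ/ℤ commuting with an irrational rotation is itself
a rotation. -/
theorem commute_irrational_rotation_is_rotation (θ : ℝ) (hθ : Irrational θ)
    (h : AddCircle (1:ℝ) ≃ₜ AddCircle (1:ℝ))
    (hcomm : ∀ x : AddCircle (1:ℝ), h (x + (θ : AddCircle (1:ℝ))) = h x + (θ : AddCircle (1:ℝ))) :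
    ∃ β : AddCircle (1:ℝ), ∀ x : AddCircle (1:ℝ), h x = x + β :=
  exists_eq_add_of_commute_add_of_denseRange_zsmul h.continuous
    (AddCircle.denseRange_zsmul_coe_iff.2 (by rwa [div_one])) hcomm
end

section
/- Suppose G ≤ Diff₂₊([0,1)) is nonabelian, J ⊆ (0,1) is an open interval invariant under a subgroup H of the centralizer of G, some g ∈ G has a fixed point in J, and some h ∈ H has no fixed point in J. Then g restricted to J is the identity. -/
/-- A model for an orientation-preserving C^r diffeomorphism of the half-open
interval [0,1): a permutation of ℝ that is the identity outside [0,1), restricts to a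
C^r monotone bijection of [0,1) with C^r inverse. -/
def IsIcoDiff (r : ℕ∞) (g : Equiv.Perm ℝ) : Prop :=
  ContDiffOn ℝ r ⇑g (Set.Ico 0 1) ∧ ContDiffOn ℝ r ⇑g.symm (Set.Ico 0 1) ∧
  Set.BijOn ⇑g (Set.Ico 0 1) (Set.Ico 0 1) ∧ StrictMonoOn ⇑g (Set.Ico 0 1) ∧
  ∀ x : ℝ, x ∉ Set.Ico (0:ℝ) 1 → g x = x

section Aux

open Set Filter Topology

variable {f : Equiv.Perm ℝ}

lemma IcoAux.contOn (hf : IsIcoDiff 2 f) : ContinuousOn ⇑f (Set.Ico 0 1) :=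
  hf.1.continuousOn

lemma IcoAux.map_mem (hf : IsIcoDiff 2 f) {x : ℝ} (hx : x ∈ Set.Ico (0:ℝ) 1) :
    f x ∈ Set.Ico (0:ℝ) 1 := hf.2.2.1.1 hx

lemma IcoAux.map_zero (hf : IsIcoDiff 2 f) : f 0 = 0 := by
  by_contra h0
  have h0m : (0:ℝ) ∈ Ico (0:ℝ) 1 := ⟨le_refl _, one_pos⟩
  have hf0 : f 0 ∈ Ico (0:ℝ) 1 := IcoAux.map_mem hf h0m
  have hpos : 0 < f 0 := lt_of_le_of_ne hf0.1 (Ne.symm h0)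
  obtain ⟨s, hs, hfs⟩ := hf.2.2.1.2.2
    (show f 0 / 2 ∈ Ico (0:ℝ) 1 from
      ⟨le_of_lt (half_pos hpos), lt_trans (half_lt_self hpos) hf0.2⟩)
  have : f 0 ≤ f s := hf.2.2.2.1.monotoneOn h0m hs hs.1
  rw [hfs] at this
  linarith [half_lt_self hpos]

lemma IcoAux.map_Ioo (hf : IsIcoDiff 2 f) {x : ℝ} (hx : x ∈ Ioo (0:ℝ) 1) :
    f x ∈ Ioo (0:ℝ) 1 := by
  have h1 := IcoAux.map_mem hf (Ioo_subset_Ico_self hx)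
  refine ⟨?_, h1.2⟩
  have := hf.2.2.2.1 ⟨le_refl 0, one_pos⟩ (Ioo_subset_Ico_self hx) hx.1
  rwa [IcoAux.map_zero hf] at this

lemma IcoAux.hasDerivAt (hf : IsIcoDiff 2 f) {x : ℝ} (hx : x ∈ Ioo (0:ℝ) 1) :
    HasDerivAt ⇑f (deriv ⇑f x) x := by
  have h1 : ContDiffAt ℝ 2 ⇑f x := hf.1.contDiffAt (Ico_mem_nhds hx.1 hx.2)
  exact (h1.differentiableAt (by norm_num)).hasDerivAt

lemma IcoAux.hasDerivWithinAt (hf : IsIcoDiff 2 f) {x : ℝ} (hx : x ∈ Ico (0:ℝ) 1) :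
    HasDerivWithinAt ⇑f (derivWithin ⇑f (Ico 0 1) x) (Ico 0 1) x := by
  have : DifferentiableWithinAt ℝ ⇑f (Ico 0 1) x :=
    (hf.1.differentiableOn (by norm_num)) x hx
  exact this.hasDerivWithinAt

lemma IcoAux.psi_contOn (hf : IsIcoDiff 2 f) :
    ContinuousOn (derivWithin ⇑f (Ico 0 1)) (Ico 0 1) :=
  hf.1.continuousOn_derivWithin (uniqueDiffOn_Ico 0 1) (by norm_num)

lemma IcoAux.psi_eq_deriv (hf : IsIcoDiff 2 f) {x : ℝ} (hx : x ∈ Ioo (0:ℝ) 1) :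
    derivWithin ⇑f (Ico 0 1) x = deriv ⇑f x :=
  derivWithin_of_mem_nhds (Ico_mem_nhds hx.1 hx.2)

lemma IcoAux.psi_pos (hf : IsIcoDiff 2 f) {x : ℝ} (hx : x ∈ Ico (0:ℝ) 1) :
    0 < derivWithin ⇑f (Ico 0 1) x := by
  have hd := IcoAux.hasDerivWithinAt hf hx
  -- nonnegativity via slopes
  have hnn : 0 ≤ derivWithin ⇑f (Ico 0 1) x := by
    have hslope : Tendsto (slope (⇑f) x) (𝓝[Ico 0 1 \ {x}] x)
        (𝓝 (derivWithin ⇑f (Ico 0 1) x)) := hasDerivWithinAt_iff_tendsto_slope.mp hd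
    have hsub : Ioo x 1 ⊆ Ico 0 1 \ {x} := fun z hz =>
      ⟨⟨le_trans hx.1 (le_of_lt hz.1), hz.2⟩, ne_of_gt hz.1⟩
    have hne : (𝓝[Ioo x 1] x).NeBot := by
      refine mem_closure_iff_nhdsWithin_neBot.mp ?_
      rw [closure_Ioo (ne_of_lt hx.2)]
      exact ⟨le_refl x, le_of_lt hx.2⟩
    have hslope2 : Tendsto (slope (⇑f) x) (𝓝[Ioo x 1] x)
        (𝓝 (derivWithin ⇑f (Ico 0 1) x)) :=
      hslope.mono_left (nhdsWithin_mono _ hsub)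
    refine ge_of_tendsto hslope2 ?_
    filter_upwards [self_mem_nhdsWithin] with z hz
    have hfz : f x ≤ f z := le_of_lt (hf.2.2.2.1 hx ⟨le_trans hx.1 (le_of_lt hz.1), hz.2⟩ hz.1)
    have h1 : (0:ℝ) < z - x := by linarith [hz.1]
    rw [slope_def_field]
    exact div_nonneg (by linarith) (le_of_lt h1)
  -- nonvanishing via the inverse
  have hne : derivWithin ⇑f (Ico 0 1) x ≠ 0 := by
    intro h0
    have hfx : f x ∈ Ico (0:ℝ) 1 := IcoAux.map_mem hf hx
    have hds : DifferentiableWithinAt ℝ ⇑f.symm (Ico 0 1) (f x) :=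
      (hf.2.1.differentiableOn (by norm_num)) (f x) hfx
    have hcomp : HasDerivWithinAt (⇑f.symm ∘ ⇑f)
        (derivWithin ⇑f.symm (Ico 0 1) (f x) * derivWithin ⇑f (Ico 0 1) x) (Ico 0 1) x :=
      (hds.hasDerivWithinAt).comp x hd hf.2.2.1.1
    have hid : (⇑f.symm ∘ ⇑f) = id := funext fun z => f.symm_apply_apply z
    rw [hid] at hcomp
    have h1 : derivWithin (id : ℝ → ℝ) (Ico 0 1) x
        = derivWithin ⇑f.symm (Ico 0 1) (f x) * derivWithin ⇑f (Ico 0 1) x :=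
      hcomp.derivWithin ((uniqueDiffOn_Ico 0 1) x hx)
    rw [derivWithin_id x _ ((uniqueDiffOn_Ico 0 1) x hx), h0, mul_zero] at h1
    exact one_ne_zero h1
  exact lt_of_le_of_ne hnn (Ne.symm hne)

lemma IcoAux.deriv_pos (hf : IsIcoDiff 2 f) {x : ℝ} (hx : x ∈ Ioo (0:ℝ) 1) :
    0 < deriv ⇑f x := by
  rw [← IcoAux.psi_eq_deriv hf hx]
  exact IcoAux.psi_pos hf (Ioo_subset_Ico_self hx)

end Aux

section Aux2
open Set Filter Topology Finset

lemma IcoAux.abs_log_sub_log_le {δ x y : ℝ} (hδ : 0 < δ) (hx : δ ≤ x) (hy : δ ≤ y) :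
    |Real.log x - Real.log y| ≤ |x - y| / δ := by
  rcases le_total y x with h | h
  · rw [abs_of_nonneg (by linarith : (0:ℝ) ≤ x - y),
      abs_of_nonneg (sub_nonneg.mpr (Real.log_le_log (by linarith) h))]
    have hy0 : 0 < y := lt_of_lt_of_le hδ hy
    have h1 : Real.log x - Real.log y = Real.log (x / y) := by
      rw [Real.log_div (by linarith) (ne_of_gt hy0)]
    rw [h1]
    have h2 : Real.log (x / y) ≤ x / y - 1 :=
      Real.log_le_sub_one_of_pos (div_pos (by linarith) hy0)
    have h3 : x / y - 1 = (x - y) / y := by field_simp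
    have h4 : (x - y) / y ≤ (x - y) / δ :=
      div_le_div_of_nonneg_left (by linarith) hδ hy
    linarith
  · rw [abs_of_nonpos (by linarith : x - y ≤ 0),
      abs_of_nonpos (sub_nonpos.mpr (Real.log_le_log (by linarith) h))]
    have hx0 : 0 < x := lt_of_lt_of_le hδ hx
    have h1 : Real.log y - Real.log x = Real.log (y / x) := by
      rw [Real.log_div (by linarith) (ne_of_gt hx0)]
    have h2 : Real.log (y / x) ≤ y / x - 1 :=
      Real.log_le_sub_one_of_pos (div_pos (by linarith) hx0)
    have h3 : y / x - 1 = (y - x) / x := by field_simp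
    have h4 : (y - x) / x ≤ (y - x) / δ :=
      div_le_div_of_nonneg_left (by linarith) hδ hx
    have h5 : -(x - y)/δ = (y - x)/δ := by ring
    linarith

/-- Lipschitz control of `log ∘ derivWithin f (Ico 0 1)` on a compact subinterval. -/
lemma IcoAux.log_deriv_lipschitz {f : Equiv.Perm ℝ} (hf : IsIcoDiff 2 f)
    {a p : ℝ} (ha : 0 ≤ a) (hap : a ≤ p) (hp : p < 1) :
    ∃ M : ℝ, 0 ≤ M ∧ ∀ u ∈ Icc a p, ∀ v ∈ Icc a p,
      |Real.log (derivWithin ⇑f (Ico 0 1) u) - Real.log (derivWithin ⇑f (Ico 0 1) v)|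
        ≤ M * |u - v| := by
  set ψ := derivWithin ⇑f (Ico 0 1) with hψ
  have hK : Icc a p ⊆ Ico (0:ℝ) 1 := fun x hx => ⟨le_trans ha hx.1, lt_of_le_of_lt hx.2 hp⟩
  have hcomp : IsCompact (Icc a p) := isCompact_Icc
  have hcont : ContinuousOn ψ (Icc a p) := (IcoAux.psi_contOn hf).mono hK
  -- positive lower bound δ
  obtain ⟨z, hz, hzmin⟩ := hcomp.exists_isMinOn (nonempty_Icc.mpr hap) hcont
  set δ := ψ z with hδdef
  have hδ : 0 < δ := IcoAux.psi_pos hf (hK hz)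
  have hδle : ∀ u ∈ Icc a p, δ ≤ ψ u := fun u hu => hzmin hu
  -- Lipschitz bound on ψ from the second derivative
  have hψC1 : ContDiffOn ℝ 1 ψ (Ico 0 1) := hf.1.derivWithin (uniqueDiffOn_Ico 0 1) (by norm_num)
  have hψ'cont : ContinuousOn (derivWithin ψ (Ico 0 1)) (Icc a p) :=
    (hψC1.continuousOn_derivWithin (uniqueDiffOn_Ico 0 1) (le_refl _)).mono hK
  obtain ⟨B, hB⟩ := hcomp.exists_bound_of_continuousOn hψ'cont
  have hd : ∀ x ∈ Icc a p, HasDerivWithinAt ψ (derivWithin ψ (Ico 0 1) x) (Icc a p) x := by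
    intro x hx
    exact (((hψC1.differentiableOn (by norm_num)) x (hK hx)).hasDerivWithinAt).mono hK
  have hlip : ∀ u ∈ Icc a p, ∀ v ∈ Icc a p, ‖ψ u - ψ v‖ ≤ B * ‖u - v‖ := fun u hu v hv =>
    (convex_Icc a p).norm_image_sub_le_of_norm_hasDerivWithin_le hd hB hv hu
  refine ⟨B / δ, ?_, ?_⟩
  · have hB0 : 0 ≤ B := le_trans (norm_nonneg _) (hB a ⟨le_refl a, hap⟩)
    positivity
  · intro u hu v hv
    have h1 := IcoAux.abs_log_sub_log_le hδ (hδle u hu) (hδle v hv)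
    have h2 : |ψ u - ψ v| ≤ B * |u - v| := by
      simpa [Real.norm_eq_abs] using hlip u hu v hv
    calc |Real.log (ψ u) - Real.log (ψ v)| ≤ |ψ u - ψ v| / δ := h1
      _ ≤ B * |u - v| / δ := by gcongr
      _ = B / δ * |u - v| := by ring

end Aux2

section Aux3
open Set Filter Topology Finset

lemma IcoAux.iterate_mem {f : ℝ → ℝ} {s : Set ℝ} (h : ∀ x ∈ s, f x ∈ s) {x : ℝ}
    (hx : x ∈ s) (n : ℕ) : f^[n] x ∈ s := Set.MapsTo.iterate h n hx

lemma IcoAux.strictMonoOn_iterate {f : ℝ → ℝ} {s : Set ℝ} (hm : StrictMonoOn f s)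
    (hmap : ∀ x ∈ s, f x ∈ s) (n : ℕ) : StrictMonoOn f^[n] s := by
  induction n with
  | zero => simpa using strictMonoOn_id
  | succ n ih =>
    intro x hx y hy hxy
    rw [Function.iterate_succ', Function.comp_apply, Function.comp_apply]
    exact hm (IcoAux.iterate_mem hmap hx n) (IcoAux.iterate_mem hmap hy n) (ih hx hy hxy)

lemma IcoAux.hasDerivAt_iterate {f : ℝ → ℝ} {x : ℝ} (n : ℕ)
    (hd : ∀ y ∈ Ioo (0:ℝ) 1, HasDerivAt f (deriv f y) y)
    (hx : ∀ i : ℕ, f^[i] x ∈ Ioo (0:ℝ) 1) :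
    HasDerivAt f^[n] (∏ i ∈ Finset.range n, deriv f (f^[i] x)) x := by
  induction n with
  | zero => simpa using hasDerivAt_id x
  | succ n ih =>
    rw [Function.iterate_succ']
    have h1 : HasDerivAt f (deriv f (f^[n] x)) (f^[n] x) := hd _ (hx n)
    have h2 := h1.comp x ih
    rw [Finset.prod_range_succ]
    rw [mul_comm]
    exact h2

end Aux3

section Core
open Set Filter Topology Finset

lemma IcoAux.kopell_core {g φ : Equiv.Perm ℝ} (hg : IsIcoDiff 2 g) (hφ : IsIcoDiff 2 φ)
    (hcomm : ∀ x : ℝ, g (φ x) = φ (g x))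
    {a b x₀ y : ℝ} (h0a : 0 ≤ a) (hb1 : b ≤ 1)
    (hφdec : ∀ x ∈ Ioo a b, φ x < x)
    (hφmaps : ∀ x ∈ Ioo a b, φ x ∈ Ioo a b)
    (hφsurj : ∀ x ∈ Ioo a b, φ.symm x ∈ Ioo a b)
    (hx₀ : x₀ ∈ Ioo a b) (hgx₀ : g x₀ = x₀)
    (hy : y ∈ Ioo a b) (hgy : y < g y) : False := by
  classical
  have hab : a < b := lt_trans hx₀.1 hx₀.2
  have hIoo : Ioo a b ⊆ Ioo (0:ℝ) 1 := fun x hx =>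
    ⟨lt_of_le_of_lt h0a hx.1, lt_of_lt_of_le hx.2 hb1⟩
  have hIco : Ioo a b ⊆ Ico (0:ℝ) 1 := fun x hx => Ioo_subset_Ico_self (hIoo hx)
  have hmg : StrictMonoOn ⇑g (Ico 0 1) := hg.2.2.2.1
  have hmφ : StrictMonoOn ⇑φ (Ico 0 1) := hφ.2.2.2.1
  have hφmapsIco : ∀ x ∈ Ico (0:ℝ) 1, φ x ∈ Ico (0:ℝ) 1 := fun x hx => IcoAux.map_mem hφ hx
  have hgmapsIco : ∀ x ∈ Ico (0:ℝ) 1, g x ∈ Ico (0:ℝ) 1 := fun x hx => IcoAux.map_mem hg hx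
  have hcomm' : ∀ x : ℝ, g (φ.symm x) = φ.symm (g x) := by
    intro x
    have h1 := hcomm (φ.symm x)
    rw [Equiv.apply_symm_apply] at h1
    calc g (φ.symm x) = φ.symm (φ (g (φ.symm x))) := (Equiv.symm_apply_apply _ _).symm
      _ = φ.symm (g x) := by rw [← h1]
  -- Step A : find a fixed point of g in (a,b) strictly above y
  obtain ⟨z, hzmem, hgz, hyz⟩ : ∃ z ∈ Ioo a b, g z = z ∧ y < z := by
    set Y : ℕ → ℝ := fun m => (⇑φ.symm)^[m] x₀ with hY
    have hYmem : ∀ m, Y m ∈ Ioo a b := fun m => IcoAux.iterate_mem hφsurj hx₀ m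
    have hYsucc : ∀ m, Y (m + 1) = φ.symm (Y m) := by
      intro m
      simp only [hY, Function.iterate_succ', Function.comp_apply]
    have hYfix : ∀ m, g (Y m) = Y m := by
      intro m
      induction m with
      | zero => simpa [hY] using hgx₀
      | succ m ih => rw [hYsucc, hcomm', ih]
    have hYmono : StrictMono Y := by
      apply strictMono_nat_of_lt_succ
      intro m
      have h1 := hφdec (Y (m + 1)) (hYmem (m + 1))
      rw [hYsucc, Equiv.apply_symm_apply] at h1
      rw [hYsucc m]
      exact h1
    by_cases hc : ∃ m, y < Y m
    · obtain ⟨m, hm⟩ := hc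
      exact ⟨Y m, hYmem m, hYfix m, hm⟩
    · exfalso
      push_neg at hc
      have hbdd : BddAbove (Set.range Y) := ⟨y, by rintro _ ⟨m, rfl⟩; exact hc m⟩
      set L := ⨆ m, Y m with hL
      have hYtend : Tendsto Y atTop (𝓝 L) := tendsto_atTop_ciSup hYmono.monotone hbdd
      have hLy : L ≤ y := ciSup_le hc
      have hLx₀ : x₀ ≤ L := by
        have : Y 0 ≤ L := le_ciSup hbdd 0
        simpa [hY] using this
      have hLmem : L ∈ Ioo a b := ⟨lt_of_lt_of_le hx₀.1 hLx₀, lt_of_le_of_lt hLy hy.2⟩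
      have hcont : ContinuousWithinAt ⇑φ (Ico 0 1) L := (IcoAux.contOn hφ).continuousWithinAt (hIco hLmem)
      have htend2 : Tendsto (fun m => Y (m + 1)) atTop (𝓝 L) :=
        hYtend.comp (tendsto_add_atTop_nat 1)
      have htend3 : Tendsto (fun m => φ (Y (m + 1))) atTop (𝓝 (φ L)) := by
        refine hcont.tendsto.comp ?_
        exact tendsto_nhdsWithin_of_tendsto_nhds_of_eventually_within _ htend2
          (Filter.Eventually.of_forall fun m => hIco (hYmem (m + 1)))
      have heq : ∀ m, φ (Y (m + 1)) = Y m := by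
        intro m; rw [hYsucc, Equiv.apply_symm_apply]
      have htend4 : Tendsto (fun m => φ (Y (m + 1))) atTop (𝓝 L) := by
        simpa only [heq] using hYtend
      have : φ L = L := tendsto_nhds_unique htend3 htend4
      exact absurd this (ne_of_lt (hφdec L hLmem))
  -- Step B : the contracting orbit based at z
  set X : ℕ → ℝ := fun n => (⇑φ)^[n] z with hX
  have hXmem : ∀ n, X n ∈ Ioo a b := fun n => IcoAux.iterate_mem hφmaps hzmem n
  have hXsucc : ∀ n, X (n + 1) = φ (X n) := by
    intro n; simp only [hX, Function.iterate_succ', Function.comp_apply]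
  have hXfix : ∀ n, g (X n) = X n := by
    intro n
    induction n with
    | zero => simpa [hX] using hgz
    | succ n ih => rw [hXsucc, hcomm, ih]
  have hXanti : StrictAnti X := by
    apply strictAnti_nat_of_succ_lt
    intro n
    rw [hXsucc]
    exact hφdec (X n) (hXmem n)
  have hXtend : Tendsto X atTop (𝓝 a) := by
    have hbdd : BddBelow (Set.range X) := ⟨a, by rintro _ ⟨n, rfl⟩; exact le_of_lt (hXmem n).1⟩
    set L := ⨅ n, X n with hL
    have htend : Tendsto X atTop (𝓝 L) := tendsto_atTop_ciInf hXanti.antitone hbdd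
    have hLa : a ≤ L := le_ciInf fun n => le_of_lt (hXmem n).1
    have hLz : L ≤ X 0 := ciInf_le hbdd 0
    have hLIco : L ∈ Ico (0:ℝ) 1 := ⟨le_trans h0a hLa,
      lt_of_le_of_lt hLz (lt_of_lt_of_le (hXmem 0).2 hb1)⟩
    have hcont : ContinuousWithinAt ⇑φ (Ico 0 1) L := (IcoAux.contOn hφ).continuousWithinAt hLIco
    have htend2 : Tendsto (fun n => φ (X n)) atTop (𝓝 (φ L)) := by
      refine hcont.tendsto.comp ?_
      exact tendsto_nhdsWithin_of_tendsto_nhds_of_eventually_within _ htend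
        (Filter.Eventually.of_forall fun n => hIco (hXmem n))
    have htend3 : Tendsto (fun n => φ (X n)) atTop (𝓝 L) := by
      have : (fun n => φ (X n)) = fun n => X (n + 1) := by
        funext n; rw [hXsucc]
      rw [this]
      exact htend.comp (tendsto_add_atTop_nat 1)
    have hfixL : φ L = L := tendsto_nhds_unique htend2 htend3
    have : L = a := by
      by_contra hne
      have hLab : L ∈ Ioo a b := ⟨lt_of_le_of_ne hLa (Ne.symm hne),
        lt_of_le_of_lt hLz (hXmem 0).2⟩
      exact absurd hfixL (ne_of_lt (hφdec L hLab))
    rwa [this] at htend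
  -- find the fundamental domain containing y
  have hex : ∃ n, X (n + 1) < y := by
    have := (hXtend.comp (tendsto_add_atTop_nat 1)).eventually (gt_mem_nhds hy.1)
    exact this.exists
  set n := Nat.find hex with hn
  have hn1 : X (n + 1) < y := Nat.find_spec hex
  have hn2 : y ≤ X n := by
    rcases Nat.eq_zero_or_pos n with h0 | hpos
    · rw [h0]
      simpa [hX] using le_of_lt hyz
    · have := Nat.find_min hex (Nat.pred_lt (Nat.pos_iff_ne_zero.mp hpos))
      rw [← Nat.succ_pred_eq_of_pos hpos]
      exact le_of_not_gt this
  -- inverse iterates and the point c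
  have hleft : ∀ k (x : ℝ), (⇑φ.symm)^[k] ((⇑φ)^[k] x) = x := by
    intro k x
    exact Function.LeftInverse.iterate (fun w => Equiv.symm_apply_apply φ w) k x
  have hsymmono : StrictMonoOn ⇑φ.symm (Ico 0 1) := by
    intro u hu v hv huv
    have hu' : φ.symm u ∈ Ico (0:ℝ) 1 := by
      obtain ⟨s, hs, hfs⟩ := hφ.2.2.1.2.2 hu
      rw [← hfs, Equiv.symm_apply_apply]; exact hs
    have hv' : φ.symm v ∈ Ico (0:ℝ) 1 := by
      obtain ⟨s, hs, hfs⟩ := hφ.2.2.1.2.2 hv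
      rw [← hfs, Equiv.symm_apply_apply]; exact hs
    by_contra hle
    push_neg at hle
    have := hmφ.monotoneOn hv' hu' hle
    rw [Equiv.apply_symm_apply, Equiv.apply_symm_apply] at this
    exact absurd huv (not_lt.mpr this)
  have hsymmaps : ∀ x ∈ Ico (0:ℝ) 1, φ.symm x ∈ Ico (0:ℝ) 1 := by
    intro x hx
    obtain ⟨s, hs, hfs⟩ := hφ.2.2.1.2.2 hx
    rw [← hfs, Equiv.symm_apply_apply]; exact hs
  have hsymmono_it : ∀ k, StrictMonoOn (⇑φ.symm)^[k] (Ico 0 1) := fun k =>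
    IcoAux.strictMonoOn_iterate hsymmono hsymmaps k
  set c : ℝ := (⇑φ.symm)^[n] y with hc
  set p : ℝ := X 0 with hp
  set q : ℝ := X 1 with hq
  have hqp : q < p := hXanti (by norm_num : (0:ℕ) < 1)
  have hpmem : p ∈ Ioo a b := hXmem 0
  have hqmem : q ∈ Ioo a b := hXmem 1
  have hgp : g p = p := hXfix 0
  have hgq : g q = q := hXfix 1
  have hXq : ∀ k, (⇑φ)^[k] q = X (k + 1) := by
    intro k
    have : X (k + 1) = (⇑φ)^[k] (φ z) := by
      simp only [hX, Function.iterate_succ_apply]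
    rw [this, hq, hX]
    simp only [Function.iterate_one]
  have hXp : ∀ k, (⇑φ)^[k] p = X k := fun k => rfl
  have hc1 : q < c := by
    have h1 : (⇑φ.symm)^[n] (X (n + 1)) < (⇑φ.symm)^[n] y :=
      hsymmono_it n (hIco (hXmem (n + 1))) (hIco hy) hn1
    have h2 : (⇑φ.symm)^[n] (X (n + 1)) = q := by
      rw [← hXq n, hleft]
    rwa [h2] at h1
  have hcp : c ≤ p := by
    have h1 : (⇑φ.symm)^[n] y ≤ (⇑φ.symm)^[n] (X n) :=
      (hsymmono_it n).monotoneOn (hIco hy) (hIco (hXmem n)) hn2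
    have h2 : (⇑φ.symm)^[n] (X n) = p := by
      rw [← hXp n, hleft]
    exact h1.trans_eq h2
  -- c is moved by g
  have hcommit : ∀ m k (x : ℝ), (⇑g)^[m] ((⇑φ)^[k] x) = (⇑φ)^[k] ((⇑g)^[m] x) := by
    intro m k x
    exact (Function.Commute.iterate_iterate (fun w => hcomm w) m k) x
  have hcommit' : ∀ k (x : ℝ), g ((⇑φ.symm)^[k] x) = (⇑φ.symm)^[k] (g x) := by
    intro k x
    exact (Function.Commute.iterate_right (fun w => hcomm' w) k) x
  have hgc : c < g c := by
    have h1 : g c = (⇑φ.symm)^[n] (g y) := by rw [hc, hcommit']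
    have h2 : (⇑φ.symm)^[n] y < (⇑φ.symm)^[n] (g y) :=
      hsymmono_it n (hIco hy) (hgmapsIco y (hIco hy)) hgy
    rw [h1]; exact h2
  have hcq : c ∈ Ioo q p := by
    refine ⟨hc1, lt_of_le_of_ne hcp ?_⟩
    intro hcontra
    rw [hcontra, hgp] at hgc
    exact lt_irrefl p hgc
  have hIooqp : Ioo q p ⊆ Ioo a b := fun x hx =>
    ⟨lt_trans hqmem.1 hx.1, lt_trans hx.2 hpmem.2⟩
  have hIooqp01 : Ioo q p ⊆ Ioo (0:ℝ) 1 := fun x hx => hIoo (hIooqp hx)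
  have hgmapsqp : ∀ u ∈ Ioo q p, g u ∈ Ioo q p := by
    intro u hu
    constructor
    · rw [← hgq]; exact hmg (hIco hqmem) (hIco (hIooqp hu)) hu.1
    · rw [← hgp]; exact hmg (hIco (hIooqp hu)) (hIco hpmem) hu.2
  have hgcq : g c ∈ Ioo q p := hgmapsqp c hcq
  have hGmem : ∀ u ∈ Ioo q p, ∀ i, (⇑g)^[i] u ∈ Ioo q p := fun u hu i =>
    IcoAux.iterate_mem hgmapsqp hu i
  -- the g-orbit of c
  set C : ℕ → ℝ := fun m => (⇑g)^[m] c with hC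
  have hCmem : ∀ m, C m ∈ Ioo q p := fun m => hGmem c hcq m
  have hgmono_it : ∀ m, StrictMonoOn (⇑g)^[m] (Ico 0 1) := fun m =>
    IcoAux.strictMonoOn_iterate hmg hgmapsIco m
  have hCmono : StrictMono C := by
    apply strictMono_nat_of_lt_succ
    intro m
    have h1 : (⇑g)^[m] c < (⇑g)^[m] (g c) :=
      hgmono_it m (hIco (hIooqp hcq)) (hIco (hIooqp hgcq)) hgc
    have h2 : C (m + 1) = (⇑g)^[m] (g c) := by
      simp only [hC, Function.iterate_succ_apply]
    rw [h2]; exact h1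
  have hCdiff : Tendsto (fun m => C (m + 1) - C m) atTop (𝓝 0) := by
    have hbdd : BddAbove (Set.range C) := ⟨p, by rintro _ ⟨m, rfl⟩; exact le_of_lt (hCmem m).2⟩
    have htend : Tendsto C atTop (𝓝 (⨆ m, C m)) := tendsto_atTop_ciSup hCmono.monotone hbdd
    have := (htend.comp (tendsto_add_atTop_nat 1)).sub htend
    simpa using this
  -- derivatives
  have hgd : ∀ u ∈ Ioo (0:ℝ) 1, HasDerivAt ⇑g (deriv ⇑g u) u := fun u hu => IcoAux.hasDerivAt hg hu
  have hφd : ∀ u ∈ Ioo (0:ℝ) 1, HasDerivAt ⇑φ (deriv ⇑φ u) u := fun u hu => IcoAux.hasDerivAt hφ hu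
  set Dg : ℕ → ℝ → ℝ := fun m u => ∏ i ∈ Finset.range m, deriv ⇑g ((⇑g)^[i] u) with hDg
  set DΦ : ℕ → ℝ → ℝ := fun k u => ∏ i ∈ Finset.range k, deriv ⇑φ ((⇑φ)^[i] u) with hDΦ
  have hgit : ∀ (m : ℕ) (u : ℝ), u ∈ Ioo q p → HasDerivAt (⇑g)^[m] (Dg m u) u := by
    intro m u hu
    exact IcoAux.hasDerivAt_iterate m hgd fun i => hIooqp01 (hGmem u hu i)
  -- MVT : slopes of iterates of g on [c, g c]
  have hMVT : ∀ m : ℕ, ∃ ξ ∈ Ioo c (g c), Dg m ξ = (C (m + 1) - C m) / (g c - c) := by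
    intro m
    have hsub : Icc c (g c) ⊆ Ioo q p := fun w hw =>
      ⟨lt_of_lt_of_le hcq.1 hw.1, lt_of_le_of_lt hw.2 hgcq.2⟩
    have hder : ∀ x ∈ Ioo c (g c), HasDerivAt (⇑g)^[m] (Dg m x) x := fun x hx =>
      hgit m x (hsub (Ioo_subset_Icc_self hx))
    have hcont : ContinuousOn (⇑g)^[m] (Icc c (g c)) := fun x hx =>
      (hgit m x (hsub hx)).continuousAt.continuousWithinAt
    obtain ⟨ξ, hξ, hξ2⟩ := exists_hasDerivAt_eq_slope (⇑g)^[m] (Dg m) hgc hcont hder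
    refine ⟨ξ, hξ, ?_⟩
    rw [hξ2]
    have h2 : (⇑g)^[m] (g c) = C (m + 1) := by
      simp only [hC, Function.iterate_succ_apply]
    rw [h2]
  -- fundamental domains
  have hIccqp : Icc q p ⊆ Ioo a b := fun x hx =>
    ⟨lt_of_lt_of_le hqmem.1 hx.1, lt_of_le_of_lt hx.2 hpmem.2⟩
  have hφmono_it : ∀ k, StrictMonoOn (⇑φ)^[k] (Ico 0 1) := fun k =>
    IcoAux.strictMonoOn_iterate hmφ hφmapsIco k
  have hdom : ∀ u ∈ Icc q p, ∀ k, (⇑φ)^[k] u ∈ Icc (X (k + 1)) (X k) := by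
    intro u hu k
    constructor
    · rw [← hXq k]
      exact (hφmono_it k).monotoneOn (hIco hqmem) (hIco (hIccqp hu)) hu.1
    · rw [← hXp k]
      exact (hφmono_it k).monotoneOn (hIco (hIccqp hu)) (hIco hpmem) hu.2
  have hdomab : ∀ k (w : ℝ), w ∈ Icc (X (k + 1)) (X k) → w ∈ Ioo a b := fun k w hw =>
    ⟨lt_of_lt_of_le (hXmem (k + 1)).1 hw.1, lt_of_le_of_lt hw.2 (hXmem k).2⟩
  have hdomap : ∀ k (w : ℝ), w ∈ Icc (X (k + 1)) (X k) → w ∈ Icc a p := by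
    intro k w hw
    refine ⟨le_of_lt (lt_of_lt_of_le (hXmem (k + 1)).1 hw.1), ?_⟩
    exact le_trans hw.2 (hXanti.antitone (Nat.zero_le k))
  -- distortion estimate
  have hap : a ≤ p := le_of_lt hpmem.1
  have hp1 : p < 1 := lt_of_lt_of_le hpmem.2 hb1
  obtain ⟨M, hM0, hMlip⟩ := IcoAux.log_deriv_lipschitz hφ h0a hap hp1
  set CC := M * (p - a) with hCC
  have hDΦpos : ∀ (k : ℕ) (u : ℝ), u ∈ Icc q p → 0 < DΦ k u := by
    intro k u hu
    refine Finset.prod_pos fun i _ => ?_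
    exact IcoAux.deriv_pos hφ (hIoo (hdomab i _ (hdom u hu i)))
  have hkey : ∀ (k : ℕ) (u : ℝ), u ∈ Icc q p → ∀ (v : ℝ), v ∈ Icc q p →
      Real.exp (-CC) * DΦ k v ≤ DΦ k u := by
    intro k u hu v hv
    have hlog : ∀ (w : ℝ), w ∈ Icc q p →
        Real.log (DΦ k w) = ∑ i ∈ Finset.range k, Real.log (deriv ⇑φ ((⇑φ)^[i] w)) := by
      intro w hw
      exact Real.log_prod fun i _ =>
        ne_of_gt (IcoAux.deriv_pos hφ (hIoo (hdomab i _ (hdom w hw i))))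
    have habs : |Real.log (DΦ k u) - Real.log (DΦ k v)| ≤ CC := by
      rw [hlog u hu, hlog v hv, ← Finset.sum_sub_distrib]
      refine le_trans (Finset.abs_sum_le_sum_abs _ _) ?_
      have hterm : ∀ i ∈ Finset.range k,
          |Real.log (deriv ⇑φ ((⇑φ)^[i] u)) - Real.log (deriv ⇑φ ((⇑φ)^[i] v))|
            ≤ M * (X i - X (i + 1)) := by
        intro i _
        have hu1 := hdom u hu i
        have hv1 := hdom v hv i
        have hu2 : (⇑φ)^[i] u ∈ Ioo (0:ℝ) 1 := hIoo (hdomab i _ hu1)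
        have hv2 : (⇑φ)^[i] v ∈ Ioo (0:ℝ) 1 := hIoo (hdomab i _ hv1)
        rw [← IcoAux.psi_eq_deriv hφ hu2, ← IcoAux.psi_eq_deriv hφ hv2]
        refine le_trans (hMlip _ (hdomap i _ hu1) _ (hdomap i _ hv1)) ?_
        have : |(⇑φ)^[i] u - (⇑φ)^[i] v| ≤ X i - X (i + 1) := by
          rw [abs_le]
          constructor <;> [linarith [hu1.1, hv1.2]; linarith [hu1.2, hv1.1]]
        exact mul_le_mul_of_nonneg_left this hM0
      refine le_trans (Finset.sum_le_sum hterm) ?_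
      rw [← Finset.mul_sum, Finset.sum_range_sub' X k]
      refine mul_le_mul_of_nonneg_left ?_ hM0
      have h1 : a < X k := (hXmem k).1
      have h2 : X 0 = p := rfl
      linarith
    have h1 := (abs_le.mp habs).1
    rw [← Real.exp_log (hDΦpos k v hv), ← Real.exp_log (hDΦpos k u hu), ← Real.exp_add]
    exact Real.exp_le_exp.mpr (by linarith)
  -- the within-derivative of g at a equals 1
  have haIco : a ∈ Ico (0:ℝ) 1 := ⟨h0a, lt_of_lt_of_le hab hb1⟩
  have hψga : derivWithin ⇑g (Ico 0 1) a = 1 := by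
    have hMVTg : ∀ k : ℕ, ∃ η ∈ Ioo (X (k + 1)) (X k), deriv ⇑g η = 1 := by
      intro k
      have hlt : X (k + 1) < X k := hXanti (Nat.lt_succ_self k)
      have hsub : Icc (X (k + 1)) (X k) ⊆ Ioo (0:ℝ) 1 := fun w hw => hIoo (hdomab k w hw)
      have hder : ∀ x ∈ Ioo (X (k + 1)) (X k), HasDerivAt ⇑g (deriv ⇑g x) x := fun x hx =>
        hgd x (hsub (Ioo_subset_Icc_self hx))
      have hcont : ContinuousOn ⇑g (Icc (X (k + 1)) (X k)) := fun x hx =>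
        (hgd x (hsub hx)).continuousAt.continuousWithinAt
      obtain ⟨η, hη, hη2⟩ := exists_hasDerivAt_eq_slope ⇑g (deriv ⇑g) hlt hcont hder
      refine ⟨η, hη, ?_⟩
      rw [hη2, hXfix, hXfix]
      exact div_self (ne_of_gt (sub_pos.mpr hlt))
    choose η hη1 hη2 using hMVTg
    have hηab : ∀ k, η k ∈ Ioo a b := fun k => hdomab k _ (Ioo_subset_Icc_self (hη1 k))
    have hηtend : Tendsto η atTop (𝓝 a) := by
      refine tendsto_of_tendsto_of_tendsto_of_le_of_le
        (hXtend.comp (tendsto_add_atTop_nat 1)) hXtend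
        (fun k => le_of_lt (hη1 k).1) (fun k => le_of_lt (hη1 k).2)
    have h1 : Tendsto (fun k => derivWithin ⇑g (Ico 0 1) (η k)) atTop
        (𝓝 (derivWithin ⇑g (Ico 0 1) a)) := by
      refine ((IcoAux.psi_contOn hg) a haIco).tendsto.comp ?_
      exact tendsto_nhdsWithin_of_tendsto_nhds_of_eventually_within _ hηtend
        (Filter.Eventually.of_forall fun k => hIco (hηab k))
    have h2 : (fun k => derivWithin ⇑g (Ico 0 1) (η k)) = fun _ => (1:ℝ) := by
      funext k
      rw [IcoAux.psi_eq_deriv hg (hIoo (hηab k))]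
      exact hη2 k
    rw [h2] at h1
    exact (tendsto_nhds_unique tendsto_const_nhds h1).symm
  -- choose m with small slope
  set εx := Real.exp (-CC) with hεx
  have hεpos : 0 < εx := Real.exp_pos _
  have hgcpos : 0 < g c - c := sub_pos.mpr hgc
  obtain ⟨m, hm⟩ := (hCdiff.eventually
    (gt_mem_nhds (show (0:ℝ) < (g c - c) * (εx / 2) by positivity))).exists
  obtain ⟨ξ, hξmem, hξval⟩ := hMVT m
  have hξqp : ξ ∈ Ioo q p := ⟨lt_trans hcq.1 hξmem.1, lt_trans hξmem.2 hgcq.2⟩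
  have hDgsmall : Dg m ξ < εx / 2 := by
    rw [hξval, div_lt_iff₀ hgcpos]
    calc C (m + 1) - C m < (g c - c) * (εx / 2) := hm
      _ = εx / 2 * (g c - c) := by ring
  -- limit of Dg m along the contracting orbit of ξ
  have hlim : Tendsto (fun k => Dg m ((⇑φ)^[k] ξ)) atTop (𝓝 1) := by
    have hrw : ∀ k, Dg m ((⇑φ)^[k] ξ) =
        ∏ i ∈ Finset.range m, deriv ⇑g ((⇑φ)^[k] ((⇑g)^[i] ξ)) := by
      intro k
      refine Finset.prod_congr rfl fun i _ => ?_
      rw [hcommit i k ξ]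
    have hfac : ∀ i ∈ Finset.range m,
        Tendsto (fun k => deriv ⇑g ((⇑φ)^[k] ((⇑g)^[i] ξ))) atTop (𝓝 1) := by
      intro i _
      have hgiξ : (⇑g)^[i] ξ ∈ Icc q p := Ioo_subset_Icc_self (hGmem ξ hξqp i)
      have hw1 : ∀ k, (⇑φ)^[k] ((⇑g)^[i] ξ) ∈ Icc (X (k + 1)) (X k) := fun k =>
        hdom _ hgiξ k
      have hwtend : Tendsto (fun k => (⇑φ)^[k] ((⇑g)^[i] ξ)) atTop (𝓝 a) :=
        tendsto_of_tendsto_of_tendsto_of_le_of_le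
          (hXtend.comp (tendsto_add_atTop_nat 1)) hXtend
          (fun k => (hw1 k).1) (fun k => (hw1 k).2)
      have h1 : Tendsto (fun k => derivWithin ⇑g (Ico 0 1) ((⇑φ)^[k] ((⇑g)^[i] ξ))) atTop
          (𝓝 (derivWithin ⇑g (Ico 0 1) a)) := by
        refine ((IcoAux.psi_contOn hg) a haIco).tendsto.comp ?_
        exact tendsto_nhdsWithin_of_tendsto_nhds_of_eventually_within _ hwtend
          (Filter.Eventually.of_forall fun k => hIco (hdomab k _ (hw1 k)))
      rw [hψga] at h1
      have h2 : (fun k => derivWithin ⇑g (Ico 0 1) ((⇑φ)^[k] ((⇑g)^[i] ξ)))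
          = fun k => deriv ⇑g ((⇑φ)^[k] ((⇑g)^[i] ξ)) := by
        funext k
        exact IcoAux.psi_eq_deriv hg (hIoo (hdomab k _ (hw1 k)))
      rwa [h2] at h1
    have := tendsto_finset_prod (Finset.range m) hfac
    simp only [Finset.prod_const_one] at this
    simp only [hrw]
    exact this
  obtain ⟨k, hk⟩ := (hlim.eventually (lt_mem_nhds (show (1:ℝ)/2 < 1 by norm_num))).exists
  -- commutation identity for derivatives
  have hξIcc : ξ ∈ Icc q p := Ioo_subset_Icc_self hξqp
  have hident : Dg m ((⇑φ)^[k] ξ) * DΦ k ξ = DΦ k ((⇑g)^[m] ξ) * Dg m ξ := by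
    have hA : HasDerivAt ((⇑g)^[m] ∘ (⇑φ)^[k]) (Dg m ((⇑φ)^[k] ξ) * DΦ k ξ) ξ := by
      refine HasDerivAt.comp ξ ?_ ?_
      · refine IcoAux.hasDerivAt_iterate m hgd fun i => ?_
        rw [hcommit i k ξ]
        exact hIoo (hdomab k _ (hdom _ (Ioo_subset_Icc_self (hGmem ξ hξqp i)) k))
      · exact IcoAux.hasDerivAt_iterate k hφd fun i => hIoo (hdomab i _ (hdom ξ hξIcc i))
    have hB : HasDerivAt ((⇑φ)^[k] ∘ (⇑g)^[m]) (DΦ k ((⇑g)^[m] ξ) * Dg m ξ) ξ := by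
      refine HasDerivAt.comp ξ ?_ ?_
      · refine IcoAux.hasDerivAt_iterate k hφd fun i => ?_
        exact hIoo (hdomab i _ (hdom _ (Ioo_subset_Icc_self (hGmem ξ hξqp m)) i))
      · exact hgit m ξ hξqp
    have hAB : ((⇑g)^[m] ∘ (⇑φ)^[k]) = ((⇑φ)^[k] ∘ (⇑g)^[m]) := by
      funext w
      exact hcommit m k w
    rw [hAB] at hA
    exact hA.unique hB
  -- final contradiction
  have hratio : εx * DΦ k ((⇑g)^[m] ξ) ≤ DΦ k ξ :=
    hkey k ξ hξIcc ((⇑g)^[m] ξ) (Ioo_subset_Icc_self (hGmem ξ hξqp m))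
  have hpos2 : 0 < DΦ k ((⇑g)^[m] ξ) :=
    hDΦpos k _ (Ioo_subset_Icc_self (hGmem ξ hξqp m))
  have hpos3 : 0 < DΦ k ξ := hDΦpos k ξ hξIcc
  nlinarith [hk, hratio, hident, hDgsmall, hpos2, hpos3, hεpos]

end Core


open Set Filter Topology in
/-- Key step in Proposition 2.2: if G ≤ Diff₊²([0,1)) is nonabelian, J ⊆ (0,1) is an open
interval invariant under a subgroup H of the centralizer of G, some g ∈ G has a fixed
point in J, and some h ∈ H has no fixed point in J, then g restricted to J is the
identity. -/
theorem fixed_interval_step (G H : Subgroup (Equiv.Perm ℝ))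
    (hG : ∀ g ∈ G, IsIcoDiff 2 g) (hH : ∀ h ∈ H, IsIcoDiff 2 h)
    (hGna : ∃ g₁ ∈ G, ∃ g₂ ∈ G, ¬Commute g₁ g₂)
    (hcent : ∀ g ∈ G, ∀ h ∈ H, Commute g h)
    (a b : ℝ) (hab : a < b) (hJ : Set.Ioo a b ⊆ Set.Ioo 0 1)
    (hinv : ∀ h ∈ H, ⇑h '' Set.Ioo a b = Set.Ioo a b)
    (g : Equiv.Perm ℝ) (hgG : g ∈ G) (hgfix : ∃ x ∈ Set.Ioo a b, g x = x)
    (h : Equiv.Perm ℝ) (hhH : h ∈ H) (hhfree : ∀ x ∈ Set.Ioo a b, h x ≠ x) :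
    ∀ x ∈ Set.Ioo a b, g x = x := by
  classical
  -- basic bounds
  have h0a : 0 ≤ a := by
    by_contra hcon
    push_neg at hcon
    set t := (a + min 0 b) / 2 with ht
    have h1 : a < min 0 b := lt_min hcon hab
    have h2 : t ∈ Ioo a b := ⟨by simp only [ht]; linarith,
      by have := min_le_right (0:ℝ) b; simp only [ht]; linarith [min_le_right (0:ℝ) b]⟩
    have := (hJ h2).1
    have h3 : t < 0 := by
      have := min_le_left (0:ℝ) b; simp only [ht]; linarith
    linarith
  have hb1 : b ≤ 1 := by
    by_contra hcon
    push_neg at hcon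
    set t := (max 1 a + b) / 2 with ht
    have h1 : max 1 a < b := max_lt hcon hab
    have h2 : t ∈ Ioo a b := ⟨by have := le_max_right (1:ℝ) a; simp only [ht]; linarith,
      by simp only [ht]; linarith⟩
    have := (hJ h2).2
    have h3 : 1 < t := by
      have := le_max_left (1:ℝ) a; simp only [ht]; linarith
    linarith
  -- membership helpers for elements of H
  have hmaps : ∀ ψ ∈ H, ∀ x ∈ Ioo a b, ψ x ∈ Ioo a b := by
    intro ψ hψ x hx
    rw [← hinv ψ hψ]
    exact Set.mem_image_of_mem _ hx
  have hsurj : ∀ ψ ∈ H, ∀ x ∈ Ioo a b, ψ.symm x ∈ Ioo a b := by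
    intro ψ hψ x hx
    rw [← hinv ψ hψ] at hx
    obtain ⟨w, hw, hww⟩ := hx
    rw [← hww, Equiv.symm_apply_apply]
    exact hw
  -- sign dichotomy for h on (a,b)
  have hsign : (∀ x ∈ Ioo a b, h x < x) ∨ (∀ x ∈ Ioo a b, x < h x) := by
    by_contra hcon
    push_neg at hcon
    obtain ⟨⟨u, hu, hu2⟩, ⟨v, hv, hv2⟩⟩ := hcon
    have hu3 : u < h u := lt_of_le_of_ne hu2 (Ne.symm (hhfree u hu))
    have hv3 : h v < v := lt_of_le_of_ne hv2 (hhfree v hv)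
    have hIco : Ioo a b ⊆ Ico (0:ℝ) 1 := fun x hx => Set.Ioo_subset_Ico_self (hJ hx)
    have hFcont : ContinuousOn (fun x => h x - x) (Ico 0 1) :=
      (IcoAux.contOn (hH h hhH)).sub continuousOn_id
    rcases le_total u v with huv | huv
    · have hsub : Icc u v ⊆ Ioo a b := fun w hw => ⟨lt_of_lt_of_le hu.1 hw.1,
        lt_of_le_of_lt hw.2 hv.2⟩
      have := intermediate_value_Icc' huv (hFcont.mono fun w hw => hIco (hsub hw))
        (show (0:ℝ) ∈ Icc ((fun x => h x - x) v) ((fun x => h x - x) u) from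
          ⟨by simpa using le_of_lt hv3, by simpa using le_of_lt hu3⟩)
      obtain ⟨w, hw1, hw2⟩ := this
      exact hhfree w (hsub hw1) (by simpa [sub_eq_zero] using hw2)
    · have hsub : Icc v u ⊆ Ioo a b := fun w hw => ⟨lt_of_lt_of_le hv.1 hw.1,
        lt_of_le_of_lt hw.2 hu.2⟩
      have := intermediate_value_Icc huv (hFcont.mono fun w hw => hIco (hsub hw))
        (show (0:ℝ) ∈ Icc ((fun x => h x - x) v) ((fun x => h x - x) u) from
          ⟨by simpa using le_of_lt hv3, by simpa using le_of_lt hu3⟩)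
      obtain ⟨w, hw1, hw2⟩ := this
      exact hhfree w (hsub hw1) (by simpa [sub_eq_zero] using hw2)
  -- a decreasing free element φ of H
  obtain ⟨φ, hφH, hφdec⟩ : ∃ φ ∈ H, ∀ x ∈ Ioo a b, φ x < x := by
    rcases hsign with hs | hs
    · exact ⟨h, hhH, hs⟩
    · refine ⟨h⁻¹, H.inv_mem hhH, ?_⟩
      intro x hx
      have h1 : h.symm x ∈ Ioo a b := hsurj h hhH x hx
      have h2 := hs (h.symm x) h1
      rw [Equiv.apply_symm_apply] at h2
      rw [Equiv.Perm.inv_def]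
      exact h2
  have hφdiff : IsIcoDiff 2 φ := hH φ hφH
  have hφmaps : ∀ x ∈ Ioo a b, φ x ∈ Ioo a b := hmaps φ hφH
  have hφsurj : ∀ x ∈ Ioo a b, φ.symm x ∈ Ioo a b := hsurj φ hφH
  have hgdiff : IsIcoDiff 2 g := hG g hgG
  have hcommgφ : ∀ x : ℝ, g (φ x) = φ (g x) := by
    intro x
    have := hcent g hgG φ hφH
    calc g (φ x) = (g * φ) x := (Equiv.Perm.mul_apply _ _ _).symm
      _ = (φ * g) x := by rw [this]
      _ = φ (g x) := Equiv.Perm.mul_apply _ _ _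
  obtain ⟨x₀, hx₀, hgx₀⟩ := hgfix
  -- main argument
  intro x hx
  by_contra hgx
  rcases lt_or_gt_of_ne hgx with hlt | hgt
  · -- g x < x : use g⁻¹
    have hg'G : g⁻¹ ∈ G := G.inv_mem hgG
    have hg'diff : IsIcoDiff 2 (g⁻¹) := hG _ hg'G
    have hcomm' : ∀ w : ℝ, (g⁻¹) (φ w) = φ ((g⁻¹) w) := by
      intro w
      have hcc : Commute (g⁻¹) φ := (hcent g hgG φ hφH).inv_left
      calc (g⁻¹) (φ w) = (g⁻¹ * φ) w := (Equiv.Perm.mul_apply _ _ _).symm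
        _ = (φ * g⁻¹) w := by rw [hcc]
        _ = φ ((g⁻¹) w) := Equiv.Perm.mul_apply _ _ _
    have hfix' : (g⁻¹) x₀ = x₀ := by
      have := congrArg (⇑(g⁻¹)) hgx₀
      rw [Equiv.Perm.inv_def, Equiv.symm_apply_apply] at this
      exact this.symm
    have hx' : x < (g⁻¹) x := by
      by_contra hcon
      push_neg at hcon
      have hIco : Ioo a b ⊆ Ico (0:ℝ) 1 := fun w hw => Set.Ioo_subset_Ico_self (hJ hw)
      have h1 : (g⁻¹) x ∈ Ico (0:ℝ) 1 := IcoAux.map_mem hg'diff (hIco hx)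
      have h2 := hgdiff.2.2.2.1.monotoneOn h1 (hIco hx) hcon
      rw [show g ((g⁻¹) x) = x from Equiv.apply_symm_apply g x] at h2
      exact absurd hlt (not_lt.mpr h2)
    exact IcoAux.kopell_core hg'diff hφdiff hcomm' h0a hb1 hφdec hφmaps hφsurj
      hx₀ hfix' hx hx'
  · exact IcoAux.kopell_core hgdiff hφdiff hcommgφ h0a hb1 hφdec hφmaps hφsurj
      hx₀ hgx₀ hx hgt
end
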